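/- arXiv:2505.18711 — 4 statements merged into one kernel-verified Lean document; each statement's English description precedes it below -/
import Mathlib

section
/- Let H₁ and H₂ be n×n complex matrices and let u : ℝ → ℂⁿ be differentiable with u'(t) = (H₁ + i·H₂)·u(t) for every t ∈ ℝ. Define the warped function v : ℝ × ℝ → ℂⁿ by v(t,p) = e^{-|p|}·u(t). Then for every t ∈ ℝ and every p > 0, v is differentiable in t and in p at (t,p) and satisfies the transport equation ∂ₜv(t,p) = -H₁·(∂ₚv(t,p)) + i·H₂·v(t,p). -/
/-- The warped phase transformation underlying the Schrödingerisation method: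
if `u' = (H₁ + i H₂) u`, then `v(t,p) = e^{-|p|} u(t)` satisfies, for `p > 0`,
the transport equation `∂ₜ v = -H₁ (∂ₚ v) + i H₂ v`. -/
theorem warped_phase_transformation {n : ℕ}
    (H₁ H₂ : Matrix (Fin n) (Fin n) ℂ) (u : ℝ → (Fin n → ℂ))
    (hu : ∀ t : ℝ, HasDerivAt u ((H₁ + Complex.I • H₂).mulVec (u t)) t)
    (v : ℝ → ℝ → (Fin n → ℂ))
    (hv : ∀ t p : ℝ, v t p = Real.exp (-|p|) • u t) :
    ∀ t : ℝ, ∀ p : ℝ, 0 < p →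
      ∃ vt vp : Fin n → ℂ,
        HasDerivAt (fun s => v s p) vt t ∧
        HasDerivAt (fun q => v t q) vp p ∧
        vt = -(H₁.mulVec vp) + Complex.I • H₂.mulVec (v t p) := by
  intro t p hp
  have habs : |p| = p := abs_of_pos hp
  refine ⟨Real.exp (-p) • ((H₁ + Complex.I • H₂).mulVec (u t)),
    (-Real.exp (-p)) • u t, ?_, ?_, ?_⟩
  · have : (fun s => v s p) = fun s => Real.exp (-p) • u s := by
      funext s; rw [hv, habs]
    rw [this]
    exact (hu t).const_smul (Real.exp (-p))
  · have h1 : HasDerivAt (fun q : ℝ => Real.exp (-q)) (-Real.exp (-p)) p := by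
      simpa using ((hasDerivAt_neg p).exp)
    have h2 : HasDerivAt (fun q : ℝ => Real.exp (-q) • u t) ((-Real.exp (-p)) • u t) p :=
      h1.smul_const (u t)
    refine h2.congr_of_eventuallyEq ?_
    filter_upwards [eventually_gt_nhds hp] with q hq
    rw [hv, abs_of_pos hq]
  · rw [hv, habs]
    rw [Matrix.add_mulVec]
    have hs : ∀ (A : Matrix (Fin n) (Fin n) ℂ) (r : ℝ) (w : Fin n → ℂ),
        A.mulVec (r • w) = r • A.mulVec w := by
      intro A r w
      rw [← Complex.coe_smul, ← Complex.coe_smul, Matrix.mulVec_smul]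
    rw [hs, hs, Matrix.smul_mulVec]
    ext i
    simp [smul_smul]
    ring
end

section
/- Let c_p, c_s ∈ ℝ with c_s ≠ 0 and 3c_p² − 4c_s² ≠ 0, and set a = (c_p²−c_s²)/(c_s²(3c_p²−4c_s²)), b = −(c_p²−2c_s²)/(2c_s²(3c_p²−4c_s²)), c = 1/c_s². Let G be the 6×6 real matrix whose upper-left 3×3 block is [[a,b,b],[b,a,b],[b,b,a]], whose lower-right 3×3 block is c·I₃, and whose off-diagonal blocks vanish. Let P be the 6×6 block-diagonal matrix whose upper-left 3×3 block is [[1/√3, 1/√3, 1/√3],[1/√2, −1/√2, 0],[1/√6, 1/√6, −2/√6]] and whose lower-right block is I₃, and let Λ = diag(1/(3c_p²−4c_s²), 1/(2c_s²), 1/(2c_s²), 1/c_s², 1/c_s², 1/c_s²). Then P·Pᵀ = I₆ (P is orthogonal) and P·G·Pᵀ = Λ; equivalently G = Pᵀ·Λ·P. -/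
/-! Since `P` is block diagonal, so are `P * Pᵀ` and `P * G * Pᵀ`, and the claim reduces to the
upper `3 × 3` block. There `G` is `(a - b) • 1 + b • J` with `J` the all-ones matrix, whose
eigenvalues `a + 2b` and `a - b` work out to `1 / (3 cp² - 4 cs²)` and `1 / (2 cs²)`. -/

open Matrix

namespace Matrix

variable {n m α : Type*} [Fintype n] [Fintype m]

theorem fromBlocks_zero_mul_mul_transpose [Semiring α] (Q : Matrix n n α) (R : Matrix m m α)
    (A : Matrix n n α) (B : Matrix m m α) :
    fromBlocks Q 0 0 R * fromBlocks A 0 0 B * (fromBlocks Q 0 0 R)ᵀ =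
      fromBlocks (Q * A * Qᵀ) 0 0 (R * B * Rᵀ) := by
  simp [fromBlocks_transpose, fromBlocks_multiply]

theorem transpose_mul_mul_eq_of_mul_mul_transpose_eq [DecidableEq n] [CommRing α]
    {P G Λ : Matrix n n α} (hP : P * Pᵀ = 1) (h : P * G * Pᵀ = Λ) : Pᵀ * Λ * P = G := by
  have hP' : Pᵀ * P = 1 := mul_eq_one_comm.mp hP
  rw [← h, ← Matrix.mul_assoc, ← Matrix.mul_assoc, hP', Matrix.one_mul, Matrix.mul_assoc, hP',
    Matrix.mul_one]

end Matrix

noncomputable def helmert3 : Matrix (Fin 3) (Fin 3) ℝ :=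
  !![1 / Real.sqrt 3, 1 / Real.sqrt 3, 1 / Real.sqrt 3;
     1 / Real.sqrt 2, -(1 / Real.sqrt 2), 0;
     1 / Real.sqrt 6, 1 / Real.sqrt 6, -(2 / Real.sqrt 6)]

theorem helmert3_mul_transpose : helmert3 * helmert3ᵀ = 1 := by
  ext i j
  fin_cases i <;> fin_cases j <;>
    simp [helmert3, mul_apply, Fin.sum_univ_succ, one_apply] <;>
    field_simp <;> ring_nf <;> norm_num

/-- `(1,1,1)` spans the eigenspace for `a + 2b`, its orthogonal complement that for `a - b`. -/
theorem helmert3_conj_circulant (a b : ℝ) :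
    helmert3 * !![a, b, b; b, a, b; b, b, a] * helmert3ᵀ = diagonal ![a + 2 * b, a - b, a - b] := by
  ext i j
  fin_cases i <;> fin_cases j <;>
    simp [helmert3, mul_apply, Fin.sum_univ_succ, diagonal] <;>
    field_simp <;> ring_nf <;> norm_num
  ring

/-- Orthogonal eigendecomposition `G = Pᵀ Λ P` of the block `G = ρ C⁻¹` of the
symmetrizer in the symmetric matrix form of the velocity-stress equations. -/
theorem symmetrizer_eigendecomposition (cp cs : ℝ) (hcs : cs ≠ 0)
    (hden : 3 * cp ^ 2 - 4 * cs ^ 2 ≠ 0)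
    (a b c : ℝ)
    (ha : a = (cp ^ 2 - cs ^ 2) / (cs ^ 2 * (3 * cp ^ 2 - 4 * cs ^ 2)))
    (hb : b = -(cp ^ 2 - 2 * cs ^ 2) / (2 * cs ^ 2 * (3 * cp ^ 2 - 4 * cs ^ 2)))
    (hc : c = 1 / cs ^ 2)
    (G P Λ : Matrix (Fin 3 ⊕ Fin 3) (Fin 3 ⊕ Fin 3) ℝ)
    (hG : G = Matrix.fromBlocks
      !![a, b, b; b, a, b; b, b, a]
      0 0 (c • (1 : Matrix (Fin 3) (Fin 3) ℝ)))
    (hP : P = Matrix.fromBlocks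
      !![1 / Real.sqrt 3, 1 / Real.sqrt 3, 1 / Real.sqrt 3;
         1 / Real.sqrt 2, -(1 / Real.sqrt 2), 0;
         1 / Real.sqrt 6, 1 / Real.sqrt 6, -(2 / Real.sqrt 6)]
      0 0 (1 : Matrix (Fin 3) (Fin 3) ℝ))
    (hΛ : Λ = Matrix.fromBlocks
      (Matrix.diagonal ![1 / (3 * cp ^ 2 - 4 * cs ^ 2), 1 / (2 * cs ^ 2), 1 / (2 * cs ^ 2)])
      0 0
      (Matrix.diagonal ![1 / cs ^ 2, 1 / cs ^ 2, 1 / cs ^ 2])) :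
    P * Pᵀ = 1 ∧ P * G * Pᵀ = Λ ∧ G = Pᵀ * Λ * P := by
  replace hP : P = fromBlocks helmert3 0 0 1 := hP
  -- as an atom, the denominator is not renormalised by `field_simp` out of reach of `hden`
  set d := 3 * cp ^ 2 - 4 * cs ^ 2 with hd
  have hlong : a + 2 * b = 1 / d := by
    rw [ha, hb]; field_simp; ring
  have hshear : a - b = 1 / (2 * cs ^ 2) := by
    rw [ha, hb]; field_simp; rw [hd]; ring
  have hlower : (1 : Matrix (Fin 3) (Fin 3) ℝ) * (c • 1) * 1ᵀ =
      diagonal ![1 / cs ^ 2, 1 / cs ^ 2, 1 / cs ^ 2] := by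
    rw [hc, transpose_one, Matrix.one_mul, Matrix.mul_one, smul_one_eq_diagonal]
    congr 1; ext i; fin_cases i <;> rfl
  have horth : P * Pᵀ = 1 := by
    simpa [hP, helmert3_mul_transpose] using
      fromBlocks_zero_mul_mul_transpose helmert3 (1 : Matrix (Fin 3) (Fin 3) ℝ) 1 1
  have hconj : P * G * Pᵀ = Λ := by
    rw [hP, hG, fromBlocks_zero_mul_mul_transpose, helmert3_conj_circulant, hlong, hshear, hlower,
      hΛ]
  exact ⟨horth, hconj, (transpose_mul_mul_eq_of_mul_mul_transpose_eq horth hconj).symm⟩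
end

section
/- Let c_p, c_s ∈ ℝ with c_s > 0 and 3c_p² > 4c_s², and set a = (c_p²−c_s²)/(c_s²(3c_p²−4c_s²)), b = −(c_p²−2c_s²)/(2c_s²(3c_p²−4c_s²)), c = 1/c_s². Then the 6×6 real symmetric matrix G whose upper-left 3×3 block is [[a,b,b],[b,a,b],[b,b,a]], whose lower-right 3×3 block is c·I₃, and whose off-diagonal blocks vanish, is positive definite. -/
/-!
The `3 × 3` block is `(a - b) • 1 + b • J` with `J` the all-ones matrix, whose quadratic form
`(a - b) ‖x‖² + b (∑ xᵢ)²` is affine in `(∑ xᵢ)² ∈ [0, 3 ‖x‖²]` (Cauchy–Schwarz). Its values at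
the two ends are `(a - b) ‖x‖²` and `(a + 2 b) ‖x‖²`, positive because
`a - b = 1 / (2 c_s²)` and `a + 2 b = 1 / (3 c_p² - 4 c_s²)`; the block `c • 1` is positive
definite because `c > 0`.
-/

open Matrix

namespace Matrix

variable {m n : Type*} [Fintype m] [Fintype n]

theorem PosDef.fromBlocks_zero {R : Type*} [CommRing R] [PartialOrder R] [StarRing R]
    [IsOrderedRing R] {A : Matrix m m R} {D : Matrix n n R} (hA : A.PosDef) (hD : D.PosDef) :
    (fromBlocks A 0 0 D).PosDef := by
  refine .of_dotProduct_mulVec_pos (hA.1.fromBlocks (by simp) hD.1) fun x hx => ?_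
  obtain ⟨u, v, rfl⟩ : ∃ u v, x = Sum.elim u v := ⟨_, _, (Sum.elim_comp_inl_inr x).symm⟩
  simp only [fromBlocks_mulVec, Sum.elim_comp_inl, Sum.elim_comp_inr, zero_mulVec, add_zero,
    zero_add, Function.star_sumElim, sumElim_dotProduct_sumElim]
  by_cases hu : u = 0
  · subst hu
    have hv : v ≠ 0 := by rintro rfl; exact hx Sum.elim_zero_zero
    exact add_pos_of_nonneg_of_pos (hA.posSemidef.dotProduct_mulVec_nonneg _)
      (hD.dotProduct_mulVec_pos hv)
  · exact add_pos_of_pos_of_nonneg (hA.dotProduct_mulVec_pos hu)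
      (hD.posSemidef.dotProduct_mulVec_nonneg _)

variable [DecidableEq n]

theorem star_dotProduct_smul_one_add_smul_of_one_mulVec (α β : ℝ) (x : n → ℝ) :
    star x ⬝ᵥ ((α • (1 : Matrix n n ℝ) + β • of fun _ _ => 1) *ᵥ x)
      = α * ∑ i, x i ^ 2 + β * (∑ i, x i) ^ 2 := by
  simp only [add_mulVec, smul_mulVec, one_mulVec, dotProduct_add, dotProduct_smul]
  simp [dotProduct, mulVec, Finset.mul_sum, Finset.sum_mul, sq]
  exact Finset.sum_comm.trans (by simp only [mul_comm])

theorem posDef_smul_one_add_smul_of_one {α β : ℝ} (hα : 0 < α)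
    (hαβ : 0 < α + Fintype.card n * β) :
    (α • (1 : Matrix n n ℝ) + β • of fun _ _ => 1).PosDef := by
  refine .of_dotProduct_mulVec_pos (IsHermitian.ext fun i j => by simp [one_apply, eq_comm])
    fun x hx => ?_
  rw [star_dotProduct_smul_one_add_smul_of_one_mulVec]
  set s := ∑ i, x i ^ 2
  set S := (∑ i, x i) ^ 2
  have hs : 0 < s := by simpa [s, dotProduct, sq] using dotProduct_star_self_pos_iff.mpr hx
  have hSs : S ≤ Fintype.card n * s := sq_sum_le_card_mul_sum_sq
  have hS0 : 0 ≤ S := sq_nonneg _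
  rcases hS0.eq_or_lt with hS | hS
  · rw [← hS, mul_zero, add_zero]
    exact mul_pos hα hs
  · have hcard : (0 : ℝ) ≤ Fintype.card n := Nat.cast_nonneg _
    refine pos_of_mul_pos_right (a := (Fintype.card n : ℝ)) ?_ hcard
    calc (0 : ℝ) < α * (Fintype.card n * s - S) + (α + Fintype.card n * β) * S :=
          add_pos_of_nonneg_of_pos (mul_nonneg hα.le (sub_nonneg.2 hSs)) (mul_pos hαβ hS)
      _ = Fintype.card n * (α * s + β * S) := by ring

end Matrix

/-- Positive definiteness of `G = ρ C⁻¹`, the upper-left block of the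
symmetrizer `Ã₀` of the velocity-stress elastic wave equations. -/
theorem symmetrizer_block_posDef (cp cs : ℝ) (hcs : 0 < cs)
    (hden : 4 * cs ^ 2 < 3 * cp ^ 2)
    (a b c : ℝ)
    (ha : a = (cp ^ 2 - cs ^ 2) / (cs ^ 2 * (3 * cp ^ 2 - 4 * cs ^ 2)))
    (hb : b = -(cp ^ 2 - 2 * cs ^ 2) / (2 * cs ^ 2 * (3 * cp ^ 2 - 4 * cs ^ 2)))
    (hc : c = 1 / cs ^ 2)
    (G : Matrix (Fin 3 ⊕ Fin 3) (Fin 3 ⊕ Fin 3) ℝ)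
    (hG : G = Matrix.fromBlocks
      !![a, b, b; b, a, b; b, b, a]
      0 0 (c • (1 : Matrix (Fin 3) (Fin 3) ℝ))) :
    G.PosDef := by
  have hD : 3 * cp ^ 2 - 4 * cs ^ 2 ≠ 0 := (sub_pos.2 hden).ne'
  have hab : a - b = 1 / (2 * cs ^ 2) := by
    rw [ha, hb, div_sub_div _ _ (by positivity) (by positivity),
      div_eq_div_iff (by positivity) (by positivity)]
    ring
  have ha2b : a + 2 * b = 1 / (3 * cp ^ 2 - 4 * cs ^ 2) := by
    rw [ha, hb]; field_simp; ring
  have hblock : !![a, b, b; b, a, b; b, b, a]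
      = (a - b) • (1 : Matrix (Fin 3) (Fin 3) ℝ) + b • of fun _ _ => 1 := by
    ext i j; fin_cases i <;> fin_cases j <;> simp
  rw [hG, hblock]
  refine PosDef.fromBlocks_zero (posDef_smul_one_add_smul_of_one ?_ ?_) (PosDef.one.smul ?_)
  · rw [hab]; positivity
  · rw [Fintype.card_fin, Nat.cast_ofNat, show a - b + 3 * b = a + 2 * b by ring, ha2b]
    exact one_div_pos.2 (sub_pos.2 hden)
  · rw [hc]; positivity
end

section
/- Let A be an m×m complex matrix with m ≥ 1 and let d ∈ ℂⁿ. Then the spectrum of the Kronecker product A ⊗ diag(d) is exactly the set of products: spectrum(A ⊗ diag(d)) = ⋃_{j=1}^{n} d_j · spectrum(A), where d_j · S denotes the image of the set S under multiplication by the scalar d_j. -/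
open Matrix Pointwise

lemma mem_spectrum_iff_det {k : Type*} [Fintype k] [DecidableEq k] (M : Matrix k k ℂ) (μ : ℂ) :
    μ ∈ spectrum ℂ M ↔ ((μ • (1 : Matrix k k ℂ)) - M).det = 0 := by
  rw [spectrum.mem_iff, Algebra.algebraMap_eq_smul_one, Matrix.isUnit_iff_isUnit_det,
    isUnit_iff_ne_zero, not_ne_iff]

/-- The spectrum of the Kronecker product of a matrix with a diagonal matrix is
the union of the scaled spectra: `spec(A ⊗ diag d) = ⋃ j, d j • spec A`. -/
theorem spectrum_kronecker_diagonal {m n : ℕ} (hm : 1 ≤ m)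
    (A : Matrix (Fin m) (Fin m) ℂ) (d : Fin n → ℂ) :
    spectrum ℂ (Matrix.kroneckerMap (· * ·) A (Matrix.diagonal d))
      = ⋃ j : Fin n, d j • spectrum ℂ A := by
  haveI : Nonempty (Fin m) := ⟨⟨0, hm⟩⟩
  have hA : (spectrum ℂ A).Nonempty :=
    spectrum.nonempty_of_isAlgClosed_of_finiteDimensional ℂ A
  have hkron : Matrix.kroneckerMap (· * ·) A (Matrix.diagonal d)
      = Matrix.blockDiagonal (fun j => d j • A) := by
    ext ⟨i, j⟩ ⟨i', j'⟩
    simp [Matrix.kroneckerMap, Matrix.blockDiagonal, Matrix.diagonal, mul_comm]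
  rw [hkron]
  ext μ
  simp only [Set.mem_iUnion, mem_spectrum_iff_det]
  have h1 : (μ • (1 : Matrix (Fin m × Fin n) (Fin m × Fin n) ℂ))
      - Matrix.blockDiagonal (fun j => d j • A)
      = Matrix.blockDiagonal (fun j => μ • (1 : Matrix (Fin m) (Fin m) ℂ) - d j • A) := by
    rw [← Matrix.blockDiagonal_one, ← Matrix.blockDiagonal_smul, ← Matrix.blockDiagonal_sub]
    rfl
  rw [h1, Matrix.det_blockDiagonal, Finset.prod_eq_zero_iff]
  constructor
  · rintro ⟨j, -, hj⟩
    refine ⟨j, ?_⟩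
    rw [← spectrum.smul_eq_smul (d j) A hA, mem_spectrum_iff_det]
    exact hj
  · rintro ⟨j, hj⟩
    rw [← spectrum.smul_eq_smul (d j) A hA, mem_spectrum_iff_det] at hj
    exact ⟨j, Finset.mem_univ j, hj⟩
end
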